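/- Let M ≤ N be positive integers. For every X ∈ Ω one has tr(XᵀX) ≤ M, with equality if and only if X ∈ Π. Consequently, the set of minimizers over Ω of the concave function X ↦ −tr(XᵀX) is exactly Π (the minima of the terminal concave objective of GNCGCP locate exactly at the partial permutation matrices). -/

import Mathlib

open Matrix BigOperators

def Omega (M N : ℕ) : Set (Matrix (Fin M) (Fin N) ℝ) :=
  {X | (∀ i j, 0 ≤ X i j) ∧ (∀ i, ∑ j, X i j = 1) ∧ (∀ j, ∑ i, X i j ≤ 1)}

def PartialPerm (M N : ℕ) : Set (Matrix (Fin M) (Fin N) ℝ) :=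
  {X | (∀ i j, X i j = 0 ∨ X i j = 1) ∧ (∀ i, ∑ j, X i j = 1) ∧ (∀ j, ∑ i, X i j ≤ 1)}

def minimizersOn {E : Type*} (S : Set E) (G : E → ℝ) : Set E :=
  {X ∈ S | ∀ Y ∈ S, G X ≤ G Y}

/-!
The entries of `X ∈ Ω` lie in `[0, 1]` because its rows sum to `1`, so `X i j ^ 2 ≤ X i j`, with
equality exactly when `X i j ∈ {0, 1}`. Summing over all entries,
`tr(XᵀX) = ∑ X i j ^ 2 ≤ ∑ X i j = M`, with equality iff `X` is a `0/1` matrix, i.e. `X ∈ Π`.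
For `M ≤ N` the set `Π` is nonempty, so the bound is attained and the minimizers of `-tr(XᵀX)`
are exactly the points where it is attained.
-/

open Finset Function

theorem Matrix.trace_transpose_mul_self {m n R : Type*} [Fintype m] [Fintype n]
    [AddCommMonoid R] [Mul R] (X : Matrix m n R) :
    (Xᵀ * X).trace = ∑ p : m × n, X p.1 p.2 * X p.1 p.2 := by
  simp only [trace, diag, mul_apply, transpose_apply]
  rw [sum_comm, Fintype.sum_prod_type' fun i j => X i j * X i j]

theorem mul_self_eq_self_iff {R : Type*} [MulZeroOneClass R] [IsLeftCancelMulZero R]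
    {x : R} : x * x = x ↔ x = 0 ∨ x = 1 := by
  by_cases hx : x = 0
  · simp [hx]
  · rw [mul_eq_left₀ hx]
    simp [hx]

section SumMulSelf

variable {ι R : Type*} [Ring R] [LinearOrder R] [IsStrictOrderedRing R] {s : Finset ι} {f : ι → R}

theorem Finset.sum_mul_self_le_sum (h0 : ∀ i ∈ s, 0 ≤ f i) (h1 : ∀ i ∈ s, f i ≤ 1) :
    ∑ i ∈ s, f i * f i ≤ ∑ i ∈ s, f i :=
  sum_le_sum fun i hi => mul_le_of_le_one_right (h0 i hi) (h1 i hi)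

theorem Finset.sum_mul_self_eq_sum_iff (h0 : ∀ i ∈ s, 0 ≤ f i) (h1 : ∀ i ∈ s, f i ≤ 1) :
    ∑ i ∈ s, f i * f i = ∑ i ∈ s, f i ↔ ∀ i ∈ s, f i = 0 ∨ f i = 1 := by
  rw [sum_eq_sum_iff_of_le fun i hi => mul_le_of_le_one_right (h0 i hi) (h1 i hi)]
  simp only [mul_self_eq_self_iff]

end SumMulSelf

theorem minimizersOn_eq_of_le {E : Type*} {S : Set E} {G : E → ℝ} {c : ℝ}
    (hle : ∀ x ∈ S, c ≤ G x) (hc : ∃ x ∈ S, G x = c) :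
    minimizersOn S G = {x ∈ S | G x = c} := by
  obtain ⟨x₀, hx₀, rfl⟩ := hc
  ext x
  simp only [minimizersOn, Set.mem_ofPred_eq]
  constructor
  · rintro ⟨hx, hmin⟩
    exact ⟨hx, le_antisymm (hmin x₀ hx₀) (hle x hx)⟩
  · rintro ⟨hx, heq⟩
    exact ⟨hx, fun y hy => heq ▸ hle y hy⟩

section Stochastic

variable {M N : ℕ} {X : Matrix (Fin M) (Fin N) ℝ}

theorem mem_partialPerm_iff :
    X ∈ PartialPerm M N ↔ X ∈ Omega M N ∧ ∀ i j, X i j = 0 ∨ X i j = 1 := by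
  constructor
  · rintro ⟨h01, hr, hc⟩
    refine ⟨⟨fun i j => ?_, hr, hc⟩, h01⟩
    rcases h01 i j with h | h <;> simp [h]
  · rintro ⟨⟨-, hr, hc⟩, h01⟩
    exact ⟨h01, hr, hc⟩

theorem partialPerm_subset_omega : PartialPerm M N ⊆ Omega M N :=
  fun _ hX => (mem_partialPerm_iff.1 hX).1

namespace Omega

theorem apply_le_one (hX : X ∈ Omega M N) (i : Fin M) (j : Fin N) : X i j ≤ 1 :=
  hX.2.1 i ▸ single_le_sum (fun k _ => hX.1 i k) (mem_univ j)

theorem sum_apply (hX : X ∈ Omega M N) : ∑ p : Fin M × Fin N, X p.1 p.2 = M := by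
  simp [Fintype.sum_prod_type' fun i j => X i j, hX.2.1]

theorem trace_le (hX : X ∈ Omega M N) : (Xᵀ * X).trace ≤ M := by
  rw [trace_transpose_mul_self, ← sum_apply hX]
  exact sum_mul_self_le_sum (fun p _ => hX.1 p.1 p.2) (fun p _ => apply_le_one hX p.1 p.2)

theorem trace_eq_iff (hX : X ∈ Omega M N) : (Xᵀ * X).trace = M ↔ X ∈ PartialPerm M N := by
  rw [trace_transpose_mul_self, ← sum_apply hX,
    sum_mul_self_eq_sum_iff (fun p _ => hX.1 p.1 p.2) (fun p _ => apply_le_one hX p.1 p.2),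
    mem_partialPerm_iff]
  simp [hX, Prod.forall]

end Omega

theorem one_submatrix_mem_partialPerm {f : Fin M → Fin N} (hf : Injective f) :
    (1 : Matrix (Fin N) (Fin N) ℝ).submatrix f id ∈ PartialPerm M N := by
  refine ⟨fun i j => ?_, fun i => ?_, fun j => ?_⟩
  · by_cases h : f i = j <;> simp [one_apply, h]
  · simp [one_apply]
  · simp only [submatrix_apply, id, one_apply, sum_boole]
    exact_mod_cast card_le_one.2 fun a ha b hb =>
      hf (((mem_filter.1 ha).2 : f a = j).trans (mem_filter.1 hb).2.symm)

theorem PartialPerm.nonempty (h : M ≤ N) : (PartialPerm M N).Nonempty :=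
  ⟨_, one_submatrix_mem_partialPerm (Fin.castLE_injective h)⟩

end Stochastic

theorem trace_sq_le_and_minimizers_general (M N : ℕ) (hMN : M ≤ N) :
    (∀ X ∈ Omega M N,
        (Xᵀ * X).trace ≤ (M : ℝ) ∧ ((Xᵀ * X).trace = (M : ℝ) ↔ X ∈ PartialPerm M N)) ∧
      minimizersOn (Omega M N) (fun X => -(Xᵀ * X).trace) = PartialPerm M N := by
  refine ⟨fun X hX => ⟨Omega.trace_le hX, Omega.trace_eq_iff hX⟩, ?_⟩
  obtain ⟨P, hP⟩ := PartialPerm.nonempty hMN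
  have hPΩ : P ∈ Omega M N := partialPerm_subset_omega hP
  rw [minimizersOn_eq_of_le (c := -M) (fun X hX => neg_le_neg (Omega.trace_le hX))
    ⟨P, hPΩ, by rw [(Omega.trace_eq_iff hPΩ).2 hP]⟩]
  ext X
  simp only [Set.mem_ofPred_eq, neg_inj]
  exact ⟨fun ⟨hX, h⟩ => (Omega.trace_eq_iff hX).1 h,
    fun hX => ⟨partialPerm_subset_omega hX, (Omega.trace_eq_iff (partialPerm_subset_omega hX)).2 hX⟩⟩

/-- For every `X ∈ Ω`, `tr(XᵀX) ≤ M` with equality iff `X ∈ Π`; hence the minimizers of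
`X ↦ -tr(XᵀX)` over Ω are exactly the partial permutation matrices. -/
theorem trace_sq_le_and_minimizers (M N : ℕ) (hM : 0 < M) (hMN : M ≤ N) :
    (∀ X ∈ Omega M N,
        (Xᵀ * X).trace ≤ (M : ℝ) ∧ ((Xᵀ * X).trace = (M : ℝ) ↔ X ∈ PartialPerm M N)) ∧
      minimizersOn (Omega M N) (fun X => -(Xᵀ * X).trace) = PartialPerm M N :=
  trace_sq_le_and_minimizers_general M N hMN
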